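/- Let n and k be positive integers, m = kn + 1, and let Δ be a 0-normalized Γ_{m,n}-semimodule. If a and a′ are (kn+1)-generators of Δ with a ≤ a′, then ⌈(a′ − a)/(kn+1)⌉ = ⌈(⌈(a′ − a)/n⌉)/k⌉. -/

import Mathlib

/-!
Put `d = a' - a` and `M = kn + 1`. As `a ∈ Δ` and `a' - M ∉ Δ`, `d - M ∉ Γ_{M,n}`. Write
`d = qM + r` with `0 ≤ r < M`. If `r = 0` then `q = 0`, so `d = 0`. Otherwise `q + r ≤ kn`, since
else `d - M = (q - 1 - s)M + (sk + k - t)n` with `kn - r = tn + s`, `0 ≤ s < n`. Then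
`d = q·kn + (q + r)` gives `⌈d/M⌉ = q + 1 = ⌈d/kn⌉`, and `⌈⌈d/n⌉/k⌉ = ⌈d/kn⌉` holds for every `d`.
-/

/-- The numerical semigroup generated by `m` and `n`, viewed as a subset of `ℤ`. -/
def Gamma (m n : ℕ) : Set ℤ := {x : ℤ | ∃ u v : ℕ, x = u * m + v * n}

/-- A 0-normalized `Γ_{m,n}`-semimodule: a subset of `ℤ≥0` containing `0` and
closed under adding `m` and `n`. -/
def IsSemimodule (m n : ℕ) (Δ : Set ℤ) : Prop :=
  (∀ x ∈ Δ, 0 ≤ x) ∧ (0 : ℤ) ∈ Δ ∧ (∀ x ∈ Δ, x + m ∈ Δ) ∧ (∀ x ∈ Δ, x + n ∈ Δ)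

theorem Int.ceil_intCast_ceil_div_natCast {K : Type*} [Field K] [LinearOrder K] [IsOrderedRing K]
    [FloorRing K] (x : K) (k : ℕ) : ⌈(⌈x⌉ : K) / k⌉ = ⌈x / k⌉ := by
  rw [← neg_inj, ← Int.floor_neg, ← Int.floor_neg, ← neg_div, ← neg_div, Int.floor_div_natCast,
    Int.floor_div_natCast, ← Int.cast_neg, Int.floor_intCast, Int.floor_neg]

theorem Int.ceil_div_eq_add_one {K : Type*} [Field K] [LinearOrder K] [IsOrderedRing K]
    [FloorRing K] {x b : K} {q : ℤ} (hb : 0 < b) (hlt : q * b < x) (hle : x ≤ (q + 1) * b) :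
    ⌈x / b⌉ = q + 1 := by
  rw [Int.ceil_eq_iff, Int.cast_add, Int.cast_one, add_sub_cancel_right, lt_div_iff₀ hb,
    div_le_iff₀ hb]
  exact ⟨hlt, hle⟩

theorem mem_Gamma {m n : ℕ} {u v : ℤ} (hu : 0 ≤ u) (hv : 0 ≤ v) : u * m + v * n ∈ Gamma m n := by
  lift u to ℕ using hu
  lift v to ℕ using hv
  exact ⟨u, v, rfl⟩

theorem add_natCast_mul_mem {Δ : Set ℤ} {c : ℤ} (h : ∀ x ∈ Δ, x + c ∈ Δ) (u : ℕ) {x : ℤ}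
    (hx : x ∈ Δ) : x + u * c ∈ Δ := by
  induction u with
  | zero => simpa using hx
  | succ u ih =>
    rw [Nat.cast_succ, add_one_mul, ← add_assoc]
    exact h _ ih

theorem IsSemimodule.add_mem {m n : ℕ} {Δ : Set ℤ} (hΔ : IsSemimodule m n Δ) {x g : ℤ}
    (hx : x ∈ Δ) (hg : g ∈ Gamma m n) : x + g ∈ Δ := by
  obtain ⟨u, v, rfl⟩ := hg
  rw [← add_assoc]
  exact add_natCast_mul_mem hΔ.2.2.2 v (add_natCast_mul_mem hΔ.2.2.1 u hx)

theorem sub_one_mul_add_mem_Gamma {k n : ℕ} (hn : 0 < n) {q r : ℤ} (hr0 : 0 ≤ r) (hr : r ≤ k * n)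
    (hqr : k * n < q + r) : (q - 1) * (k * n + 1) + r ∈ Gamma (k * n + 1) n := by
  have hn' : (0 : ℤ) < n := Nat.cast_pos.mpr hn
  set t := (k * n - r) / n
  set s := (k * n - r) % n
  have hdiv : n * t + s = k * n - r := Int.mul_ediv_add_emod _ _
  have hs : 0 ≤ s := Int.emod_nonneg _ hn'.ne'
  have hsn : s < n := Int.emod_lt_of_pos _ hn'
  have ht0 : 0 ≤ t := Int.ediv_nonneg (by linarith) hn'.le
  have ht : t ≤ k := le_of_mul_le_mul_left (by linarith) hn'
  have hsq : s < q := by nlinarith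
  convert mem_Gamma (m := k * n + 1) (n := n) (u := q - 1 - s) (v := s * k + k - t)
    (by linarith) (by nlinarith) using 1
  push_cast
  linear_combination hdiv

theorem ceil_div_knp1_eq_ceil_div_kn {k n : ℕ} {d : ℤ} (hd : 0 ≤ d)
    (hΓ : d - (k * n + 1) ∉ Gamma (k * n + 1) n) :
    ⌈(d : ℚ) / (k * n + 1)⌉ = ⌈(d : ℚ) / (k * n)⌉ := by
  set M : ℤ := k * n + 1
  have hM : 0 < M := by positivity
  set q := d / M
  set r := d % M
  have hdqr : M * q + r = d := Int.mul_ediv_add_emod _ _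
  have hr : 0 ≤ r := Int.emod_nonneg _ hM.ne'
  have hrM : r < M := Int.emod_lt_of_pos _ hM
  have hq : 0 ≤ q := Int.ediv_nonneg hd hM.le
  rcases hr.eq_or_lt with hr0 | hr1
  · have hq0 : q = 0 := by
      by_contra hq0
      apply hΓ
      convert mem_Gamma (m := k * n + 1) (n := n) (u := q - 1) (v := 0) (by omega) le_rfl using 1
      push_cast
      linear_combination -hdqr - hr0
    obtain rfl : d = 0 := by rw [← hdqr, hq0, ← hr0]; ring
    simp
  have hsum : q + r ≤ k * n := by
    by_contra! hsum
    have hn : 0 < n := Nat.pos_of_ne_zero (by rintro rfl; omega)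
    apply hΓ
    convert sub_one_mul_add_mem_Gamma hn hr (by omega) hsum using 1
    linear_combination -hdqr
  have hdqrQ : ((k * n + 1) * q + r : ℚ) = d := by exact_mod_cast hdqr
  have hrQ : (1 : ℚ) ≤ r := by exact_mod_cast hr1
  have hrMQ : (r : ℚ) ≤ k * n + 1 := by exact_mod_cast hrM.le
  have hsumQ : (q + r : ℚ) ≤ k * n := by exact_mod_cast hsum
  have hqQ : (0 : ℚ) ≤ q := by exact_mod_cast hq
  rw [Int.ceil_div_eq_add_one (q := q) (by positivity) (by linarith) (by linarith),
    Int.ceil_div_eq_add_one (q := q) (by linarith) (by linarith) (by linarith)]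

theorem ceil_div_generators_knp1_general (n k : ℕ)
    (Δ : Set ℤ) (hΔ : IsSemimodule (k * n + 1) n Δ)
    (a a' : ℤ) (ha : a ∈ Δ)
    (hb' : a' - (k * n + 1) ∉ Δ) (hle : a ≤ a') :
    ⌈((a' - a : ℚ)) / (k * n + 1)⌉ = ⌈((⌈((a' - a : ℚ)) / n⌉ : ℚ)) / k⌉ := by
  have hΓ : a' - a - (k * n + 1) ∉ Gamma (k * n + 1) n := fun h ↦
    hb' (by convert hΔ.add_mem ha h using 1; ring)
  rw [Int.ceil_intCast_ceil_div_natCast, div_div, mul_comm (n : ℚ)]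
  exact_mod_cast ceil_div_knp1_eq_ceil_div_kn (sub_nonneg.mpr hle) hΓ

/-- For `m = kn+1` and `(kn+1)`-generators `a ≤ a'` of `Δ`:
`⌈(a'-a)/(kn+1)⌉ = ⌈⌈(a'-a)/n⌉/k⌉`. -/
theorem ceil_div_generators_knp1 (n k : ℕ) (hn : 0 < n) (hk : 0 < k)
    (Δ : Set ℤ) (hΔ : IsSemimodule (k * n + 1) n Δ)
    (a a' : ℤ) (ha : a ∈ Δ) (ha' : a - (k * n + 1) ∉ Δ)
    (hb : a' ∈ Δ) (hb' : a' - (k * n + 1) ∉ Δ) (hle : a ≤ a') :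
    ⌈((a' - a : ℚ)) / (k * n + 1)⌉ = ⌈((⌈((a' - a : ℚ)) / n⌉ : ℚ)) / k⌉ :=
  ceil_div_generators_knp1_general n k Δ hΔ a a' ha hb' hle
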